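/- Let μ ≠ 0, ε = ±1, and consider the pseudo-orthonormal frame u₁, u₂, u₃ on ℝ³ given by u₁ = e^{μx₃}∂₁ + (1/(2μ))((μ³x₂² + ε)e^{μx₃} − εe^{−μx₃})∂₂ − μx₂e^{μx₃}∂₃, u₂ = e^{−μx₃}∂₂, u₃ = ∂₃, and the metric g with components g₁₁ = (ε/μ)(e^{−2μx₃} − 1), g₁₂ = 1, g₁₃ = μx₂, g₃₃ = 1. Then at every point p ∈ ℝ³: g_p(u₁,u₂) = 1, g_p(u₃,u₃) = 1, and g_p(u₁,u₁) = g_p(u₂,u₂) = g_p(u₁,u₃) = g_p(u₂,u₃) = 0. -/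

import Mathlib

/-- A point of `ℝ³`. -/
abbrev Pt := Fin 3 → ℝ

/-- The matrix of the metric `g` at a point `p = (x₁,x₂,x₃)`. -/
noncomputable def gMat (μ ε : ℝ) (p : Pt) : Matrix (Fin 3) (Fin 3) ℝ :=
  ![![(ε/μ) * (Real.exp (-(2*μ*p 2)) - 1), 1, μ * p 1],
    ![1, 0, 0],
    ![μ * p 1, 0, 1]]

/-- `g` evaluated on a pair of tangent vectors at `p`. -/
noncomputable def gBil (μ ε : ℝ) (p v w : Pt) : ℝ :=
  ∑ i : Fin 3, ∑ j : Fin 3, gMat μ ε p i j * v i * w j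

/-- `u₁ = e^{μx₃}∂₁ + (1/(2μ))((μ³x₂² + ε)e^{μx₃} − εe^{−μx₃})∂₂ − μx₂e^{μx₃}∂₃`. -/
noncomputable def u₁ (μ ε : ℝ) : Pt → Pt := fun p =>
  ![Real.exp (μ * p 2),
    (1/(2*μ)) * ((μ^3 * (p 1)^2 + ε) * Real.exp (μ * p 2) - ε * Real.exp (-(μ * p 2))),
    -(μ * p 1 * Real.exp (μ * p 2))]

/-- `u₂ = e^{−μx₃}∂₂`. -/
noncomputable def u₂ (μ : ℝ) : Pt → Pt := fun p => ![0, Real.exp (-(μ * p 2)), 0]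

/-- `u₃ = ∂₃`. -/
noncomputable def u₃ : Pt → Pt := fun _ => ![0, 0, 1]

open Real

theorem gBil_apply (μ ε : ℝ) (p v w : Pt) :
    gBil μ ε p v w = (ε / μ) * (exp (-(2 * μ * p 2)) - 1) * v 0 * w 0 + v 0 * w 1 + v 1 * w 0
      + μ * p 1 * (v 0 * w 2 + v 2 * w 0) + v 2 * w 2 := by
  simp only [gBil, gMat, Fin.sum_univ_three, Matrix.cons_val_zero, Matrix.cons_val_one,
    Matrix.cons_val_two, Matrix.head_cons, Matrix.tail_cons]
  ring

/- With `E = e^{μx₃}` the pairing is `(ε/μ)(1 - E²) + ((μ³x₂² + ε)E² - ε)/μ - μ²x₂²E²`: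
the `∂₂`-component of `u₁` is chosen exactly to cancel the `g₁₁` and `g₁₃` contributions. -/
theorem gBil_u₁_u₁ {μ : ℝ} (hμ : μ ≠ 0) (ε : ℝ) (p : Pt) :
    gBil μ ε p (u₁ μ ε p) (u₁ μ ε p) = 0 := by
  have exp_neg_two_mul : exp (-(2 * μ * p 2)) = (exp (μ * p 2) ^ 2)⁻¹ := by
    rw [← exp_nat_mul, ← exp_neg]; ring_nf
  simp only [gBil_apply, u₁, Matrix.cons_val_zero, Matrix.cons_val_one,
    Matrix.cons_val_two, Matrix.head_cons, Matrix.tail_cons, exp_neg_two_mul, exp_neg]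
  field_simp
  ring

theorem frame_pseudo_orthonormal_general (μ ε : ℝ) (hμ : μ ≠ 0) :
    ∀ p : Pt,
      gBil μ ε p (u₁ μ ε p) (u₂ μ p) = 1 ∧
      gBil μ ε p (u₃ p) (u₃ p) = 1 ∧
      gBil μ ε p (u₁ μ ε p) (u₁ μ ε p) = 0 ∧
      gBil μ ε p (u₂ μ p) (u₂ μ p) = 0 ∧
      gBil μ ε p (u₁ μ ε p) (u₃ p) = 0 ∧
      gBil μ ε p (u₂ μ p) (u₃ p) = 0 := by
  intro p
  refine ⟨?_, ?_, gBil_u₁_u₁ hμ ε p, ?_, ?_, ?_⟩ <;>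
    simp [gBil_apply, u₁, u₂, u₃, ← exp_add]

/-- The frame `(u₁,u₂,u₃)` is pseudo-orthonormal for `g`:
`g(u₁,u₂) = g(u₃,u₃) = 1` and all other pairings vanish. -/
theorem frame_pseudo_orthonormal (μ ε : ℝ) (hμ : μ ≠ 0) (hε : ε = 1 ∨ ε = -1) :
    ∀ p : Pt,
      gBil μ ε p (u₁ μ ε p) (u₂ μ p) = 1 ∧
      gBil μ ε p (u₃ p) (u₃ p) = 1 ∧
      gBil μ ε p (u₁ μ ε p) (u₁ μ ε p) = 0 ∧
      gBil μ ε p (u₂ μ p) (u₂ μ p) = 0 ∧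
      gBil μ ε p (u₁ μ ε p) (u₃ p) = 0 ∧
      gBil μ ε p (u₂ μ p) (u₃ p) = 0 :=
  frame_pseudo_orthonormal_general μ ε hμ
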